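/- Let k ≥ 1 be an integer and g : ℕ → ℝ a nonnegative multiplicative function supported on squarefree numbers such that g(p) ≤ k/p + C₀/p² for all primes p and some constant C₀. Then there is a constant C, depending only on k and C₀, such that for all z ≥ 2, Σ_{l : every prime factor of l is < z} g(l) ≤ C·(log z)^k, the sum running over all positive integers l all of whose prime factors are less than z. -/

import Mathlib

open scoped Classical

/-- `g` is a multiplicative function supported on squarefree numbers. -/
def MultSF (g : ℕ → ℝ) : Prop :=
  g 1 = 1 ∧ (∀ m n : ℕ, Nat.Coprime m n → g (m * n) = g m * g n) ∧
    ∀ n : ℕ, ¬ Squarefree n → g n = 0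

/-!
The sum over `z`-smooth `l` is the Euler product `∏_{p < z} (1 + g p) ≤ exp (∑_{p < z} g p)`,
and `∑_{p < z} g p ≤ k ∑_{p < z} 1/p + |C₀| π²/6`. The reciprocal sum of the primes is at most
`log log z + O(1)` (Mertens); this follows by discrete partial summation from
`∑_{p ≤ n} log p / p ≤ log n + log 4`, which comes from Legendre's formula for `n!` together with
Chebyshev's bound `θ(n) ≤ n log 4`.
-/

open Real Finset
open scoped Nat

theorem Nat.div_le_factorization_factorial {p : ℕ} (hp : p.Prime) (n : ℕ) :
    n / p ≤ (n !).factorization p := by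
  rw [Nat.factorization_factorial hp (lt_add_one (Nat.log p n))]
  rcases lt_or_ge n p with h | h
  · simp [Nat.div_eq_of_lt h]
  · have h1 : 1 ∈ Ico 1 (Nat.log p n + 1) := by
      simp [Nat.log_pos hp.one_lt h]
    simpa using single_le_sum (f := fun i => n / p ^ i) (fun _ _ => Nat.zero_le _) h1

theorem log_factorial_eq_sum_primesLE (n : ℕ) :
    log (n ! : ℕ) = ∑ p ∈ n.primesLE, ((n !).factorization p : ℝ) * log p := by
  rw [log_nat_eq_sum_factorization, Finsupp.sum_of_support_subset _ _ _ (by simp)]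
  intro p hp
  rw [Nat.support_factorization] at hp
  have hp' := Nat.prime_of_mem_primeFactors hp
  exact Nat.mem_primesLE.mpr ⟨hp'.dvd_factorial.mp (Nat.dvd_of_mem_primeFactors hp), hp'⟩

theorem sum_primesLE_div_mul_log_le_log_factorial (n : ℕ) :
    ∑ p ∈ n.primesLE, ((n / p : ℕ) : ℝ) * log p ≤ log (n ! : ℕ) := by
  rw [log_factorial_eq_sum_primesLE]
  gcongr with p hp
  exact Nat.div_le_factorization_factorial (Nat.prime_of_mem_primesLE hp) n

theorem sum_primesLE_log_div_le (n : ℕ) :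
    ∑ p ∈ n.primesLE, log p / p ≤ log n + log 4 := by
  rcases Nat.eq_zero_or_pos n with rfl | hn
  · simp [Nat.primesLE]; positivity
  have hn' : (0 : ℝ) < n := by exact_mod_cast hn
  have hterm : ∀ p ∈ n.primesLE, n * (log p / p) ≤ ((n / p : ℕ) : ℝ) * log p + log p := by
    intro p hmem
    have hp := Nat.prime_of_mem_primesLE hmem
    have hp0 : (p : ℝ) ≠ 0 := by exact_mod_cast hp.ne_zero
    have hdiv : (n : ℝ) ≤ p * ((n / p : ℕ) + 1) := by
      exact_mod_cast (Nat.lt_mul_div_succ n hp.pos).le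
    calc n * (log p / p) ≤ p * ((n / p : ℕ) + 1) * (log p / p) := by gcongr
      _ = ((n / p : ℕ) : ℝ) * log p + log p := by field_simp
  have hsum : n * ∑ p ∈ n.primesLE, log p / p ≤ n * (log n + log 4) := calc
    n * ∑ p ∈ n.primesLE, log p / p
        ≤ ∑ p ∈ n.primesLE, ((n / p : ℕ) : ℝ) * log p + ∑ p ∈ n.primesLE, log p := by
      rw [mul_sum, ← sum_add_distrib]; exact sum_le_sum hterm
    _ ≤ log (n ! : ℕ) + log 4 * n := by
      gcongr
      · exact sum_primesLE_div_mul_log_le_log_factorial n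
      · rw [← Chebyshev.theta_eq_sum_primesLE_log]; exact Chebyshev.theta_le_log4_mul_x hn'.le
    _ ≤ log ((n ^ n : ℕ) : ℝ) + log 4 * n := by
      gcongr
      exact Nat.factorial_le_pow n
    _ = n * (log n + log 4) := by push_cast; rw [log_pow]; ring
  exact le_of_mul_le_mul_left hsum hn'

theorem div_add_log_le_div_add_log {T a b : ℝ} (ha : 0 < a) (hab : a ≤ b) (hT : T ≤ a) :
    T / a + log a ≤ T / b + log b := by
  have hb : 0 < b := ha.trans_le hab
  have hlog : (b - a) / b ≤ log b - log a := by
    have := log_le_sub_one_of_pos (div_pos ha hb)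
    rw [log_div ha.ne' hb.ne'] at this
    have h : a / b - 1 = -((b - a) / b) := by field_simp; ring
    linarith
  have hdiff : T / a - T / b ≤ (b - a) / b := calc
    T / a - T / b = T * ((b - a) / (a * b)) := by field_simp
    _ ≤ a * ((b - a) / (a * b)) := by gcongr
    _ = (b - a) / b := by field_simp
  linarith

/-- Partial summation of `∑ log p / p` against `1 / log p`, one integer at a time: a new prime
`n + 1` adds `1 / (n + 1)` to both sides, and otherwise the right-hand side can only grow, since
`a ↦ T / a + log a` increases for `a ≥ T`. The constant makes `n = 2` an equality. -/
theorem sum_primesLE_one_div_le_abel {n : ℕ} (hn : 2 ≤ n) :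
    ∑ p ∈ n.primesLE, 1 / (p : ℝ) ≤
      (∑ p ∈ n.primesLE, log p / p - log 4) / log n + log (log n) +
        (log 4 / log 2 - log (log 2)) := by
  induction n, hn using Nat.le_induction with
  | base =>
    have h2 : Nat.primesLE 2 = {2} := by decide
    have hlog4 : log 4 = 2 * log 2 := by
      rw [show (4 : ℝ) = 2 ^ 2 by norm_num, log_pow]; push_cast; ring
    have hlog2 : log 2 ≠ 0 := (log_pos one_lt_two).ne'
    rw [h2, sum_singleton, sum_singleton, hlog4]
    field_simp
    push_cast
    linarith
  | succ n hn ih =>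
    have ha : 0 < log n := log_pos (by exact_mod_cast hn)
    have hab : log n ≤ log (n + 1 : ℕ) := log_le_log (by positivity) (by simp)
    have hmono := div_add_log_le_div_add_log ha hab
      (by linarith [sum_primesLE_log_div_le n] : ∑ p ∈ n.primesLE, log p / p - log 4 ≤ log n)
    rw [Nat.primesLE_succ]
    split_ifs with hp
    · rw [sum_insert (Nat.notMem_primesLE _), sum_insert (Nat.notMem_primesLE _)]
      have hb : log (n + 1 : ℕ) ≠ 0 := (ha.trans_le hab).ne'
      have hnew : log (n + 1 : ℕ) / (n + 1 : ℕ) / log (n + 1 : ℕ) = 1 / (n + 1 : ℕ) := by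
        field_simp
      rw [add_sub_assoc, add_div, hnew]
      linarith
    · linarith

theorem exists_sum_primesLE_floor_one_div_le_log_log :
    ∃ B : ℝ, ∀ x : ℝ, 2 ≤ x → ∑ p ∈ ⌊x⌋₊.primesLE, 1 / (p : ℝ) ≤ log (log x) + B := by
  refine ⟨1 + log 4 / log 2 - log (log 2), fun x hx => ?_⟩
  have hn : 2 ≤ ⌊x⌋₊ := Nat.le_floor (by exact_mod_cast hx)
  have hlog : 0 < log ⌊x⌋₊ := log_pos (by exact_mod_cast hn)
  have hfirst : (∑ p ∈ ⌊x⌋₊.primesLE, log p / p - log 4) / log ⌊x⌋₊ ≤ 1 := by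
    rw [div_le_one hlog]; linarith [sum_primesLE_log_div_le ⌊x⌋₊]
  have hloglog : log (log ⌊x⌋₊) ≤ log (log x) :=
    log_le_log hlog (log_le_log (by positivity) (Nat.floor_le (by linarith)))
  linarith [sum_primesLE_one_div_le_abel hn]

theorem sum_one_div_sq_le (s : Finset ℕ) : ∑ n ∈ s, 1 / (n : ℝ) ^ 2 ≤ π ^ 2 / 6 :=
  sum_le_hasSum s (fun _ _ => by positivity) hasSum_zeta_two

theorem exists_prod_primesBelow_ceil_one_add_le (k : ℕ) (C₀ : ℝ) :
    ∃ C : ℝ, 0 < C ∧ ∀ g : ℕ → ℝ, (∀ n, 0 ≤ g n) →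
      (∀ p : ℕ, p.Prime → g p ≤ k / p + C₀ / (p : ℝ) ^ 2) →
      ∀ z : ℝ, 2 ≤ z → ∏ p ∈ ⌈z⌉₊.primesBelow, (1 + g p) ≤ C * log z ^ k := by
  obtain ⟨B, hB⟩ := exists_sum_primesLE_floor_one_div_le_log_log
  refine ⟨exp (k * B + |C₀| * (π ^ 2 / 6)), exp_pos _, fun g hg0 hgp z hz => ?_⟩
  have hsub : ⌈z⌉₊.primesBelow ⊆ ⌊z⌋₊.primesLE := fun p hp => by
    rw [Nat.mem_primesBelow, Nat.lt_ceil] at hp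
    exact Nat.mem_primesLE.mpr ⟨Nat.le_floor hp.1.le, hp.2⟩
  have hrecip : ∑ p ∈ ⌈z⌉₊.primesBelow, 1 / (p : ℝ) ≤ log (log z) + B :=
    (sum_le_sum_of_subset_of_nonneg hsub fun _ _ _ => by positivity).trans (hB z hz)
  have hsq : C₀ * ∑ p ∈ ⌈z⌉₊.primesBelow, 1 / (p : ℝ) ^ 2 ≤ |C₀| * (π ^ 2 / 6) :=
    (mul_le_mul_of_nonneg_right (le_abs_self C₀) (sum_nonneg fun _ _ => by positivity)).trans
      (by gcongr; exact sum_one_div_sq_le _)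
  have hsum : ∑ p ∈ ⌈z⌉₊.primesBelow, g p ≤ k * (log (log z) + B) + |C₀| * (π ^ 2 / 6) := calc
    ∑ p ∈ ⌈z⌉₊.primesBelow, g p
        ≤ ∑ p ∈ ⌈z⌉₊.primesBelow, (k / (p : ℝ) + C₀ / (p : ℝ) ^ 2) :=
      sum_le_sum fun p hp => hgp p (Nat.prime_of_mem_primesBelow hp)
    _ = k * ∑ p ∈ ⌈z⌉₊.primesBelow, 1 / (p : ℝ) +
          C₀ * ∑ p ∈ ⌈z⌉₊.primesBelow, 1 / (p : ℝ) ^ 2 := by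
      simp only [mul_sum, ← sum_add_distrib, mul_one_div]
    _ ≤ k * (log (log z) + B) + |C₀| * (π ^ 2 / 6) := by gcongr
  have hlog : 0 < log z := log_pos (by linarith)
  calc ∏ p ∈ ⌈z⌉₊.primesBelow, (1 + g p) ≤ exp (∑ p ∈ ⌈z⌉₊.primesBelow, g p) :=
        prod_one_add_le_exp_sum _ hg0
    _ ≤ exp (k * (log (log z) + B) + |C₀| * (π ^ 2 / 6)) := exp_le_exp.mpr hsum
    _ = exp (k * B + |C₀| * (π ^ 2 / 6)) * log z ^ k := by
      rw [← exp_log (pow_pos hlog k), ← exp_add, log_pow]; ring_nf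

theorem MultSF.hasSum_smoothNumbers {g : ℕ → ℝ} (hg : MultSF g) (n : ℕ) :
    HasSum (fun m : n.smoothNumbers => g m) (∏ p ∈ n.primesBelow, (1 + g p)) := by
  obtain ⟨hg1, hmul, hsf⟩ := hg
  have hpow : ∀ {p : ℕ}, p.Prime → ∀ e, 2 ≤ e → g (p ^ e) = 0 := fun hp e he =>
    hsf _ fun h => by
      have := (Nat.squarefree_pow_iff hp.ne_one (by omega)).mp h
      omega
  have hsum : ∀ p : ℕ, p.Prime → HasSum (fun e => g (p ^ e)) (1 + g p) := fun p hp => by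
    have h : HasSum (fun e => g (p ^ e)) (∑ e ∈ range 2, g (p ^ e)) :=
      hasSum_sum_of_ne_finset_zero fun e he => hpow hp e (by simp at he; omega)
    rwa [sum_range_succ, sum_range_one, pow_zero, pow_one, hg1] at h
  have h := EulerProduct.summable_and_hasSum_smoothNumbers_prod_primesBelow_tsum hg1
    (fun hmn => hmul _ _ hmn) (fun hp => (hsum _ hp).summable.norm) n
  rw [prod_congr rfl fun p hp => (hsum p (Nat.prime_of_mem_primesBelow hp)).tsum_eq] at h
  exact h.2

theorem Nat.mem_smoothNumbers_ceil_iff {x : ℝ} {m : ℕ} :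
    m ∈ ⌈x⌉₊.smoothNumbers ↔ 0 < m ∧ ∀ p : ℕ, p.Prime → p ∣ m → (p : ℝ) < x := by
  rw [mem_smoothNumbers, pos_iff_ne_zero]
  refine and_congr_right fun hm => ?_
  simp [mem_primeFactorsList hm, lt_ceil]

theorem stmt11_general (k : ℕ) (C₀ : ℝ) :
    ∃ C : ℝ, 0 < C ∧ ∀ g : ℕ → ℝ, MultSF g → (∀ n : ℕ, 0 ≤ g n) →
      (∀ p : ℕ, p.Prime → g p ≤ k / p + C₀ / (p : ℝ) ^ 2) →
      ∀ z : ℝ, 2 ≤ z →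
        Summable (fun l : {l : ℕ // 0 < l ∧ ∀ p : ℕ, p.Prime → p ∣ l → (p : ℝ) < z} =>
          g l) ∧
        (∑' l : {l : ℕ // 0 < l ∧ ∀ p : ℕ, p.Prime → p ∣ l → (p : ℝ) < z}, g l) ≤
          C * Real.log z ^ k := by
  obtain ⟨C, hC, hprod⟩ := exists_prod_primesBelow_ceil_one_add_le k C₀
  refine ⟨C, hC, fun g hg hg0 hgp z hz => ?_⟩
  have h := (Equiv.subtypeEquivRight fun _ => Nat.mem_smoothNumbers_ceil_iff).symm.hasSum_iff.mpr
    (hg.hasSum_smoothNumbers ⌈z⌉₊)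
  exact ⟨h.summable, h.tsum_eq ▸ hprod g hg0 hgp z hz⟩

/-- The bound `Σ_{l z-smooth} g(l) ≤ C (log z)^k` used in the proof of Theorem 4. -/
theorem stmt11 (k : ℕ) (hk : 1 ≤ k) (C₀ : ℝ) (hC₀ : 0 ≤ C₀) :
    ∃ C : ℝ, 0 < C ∧ ∀ g : ℕ → ℝ, MultSF g → (∀ n : ℕ, 0 ≤ g n) →
      (∀ p : ℕ, p.Prime → g p ≤ k / p + C₀ / (p : ℝ) ^ 2) →
      ∀ z : ℝ, 2 ≤ z →
        Summable (fun l : {l : ℕ // 0 < l ∧ ∀ p : ℕ, p.Prime → p ∣ l → (p : ℝ) < z} =>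
          g l) ∧
        (∑' l : {l : ℕ // 0 < l ∧ ∀ p : ℕ, p.Prime → p ∣ l → (p : ℝ) < z}, g l) ≤
          C * Real.log z ^ k :=
  stmt11_general k C₀
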